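/- arXiv:1203.0793 — 2 statements merged into one kernel-verified Lean document; each statement's English description precedes it below -/
import Mathlib

section
/- Let a, b, c ∈ ℝ and define the 2-homogeneous polynomial P(z₁,z₂) = a z₁² + b z₂² + c z₁z₂ on ℂ². Then sup{|P(z₁,z₂)| : z₁, z₂ ∈ ℂ, |z₁| ≤ 1, |z₂| ≤ 1} equals |a+b| + |c| if ab ≥ 0 or |c(a+b)| > 4|ab|, and equals (|a| + |b|)·√(1 + c²/(4|ab|)) otherwise (i.e., when ab < 0 and |c(a+b)| ≤ 4|ab|). -/
open Complex Metric

private lemma aux_torus_sq (a b c : ℝ) (z₁ z₂ : ℂ) (h1 : ‖z₁‖ = 1)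
    (h2 : ‖z₂‖ = 1) :
    ‖(a : ℂ) * z₁ ^ 2 + (b : ℂ) * z₂ ^ 2 + (c : ℂ) * z₁ * z₂‖ ^ 2 =
      ((a + b) * (z₁ * (starRingEnd ℂ) z₂).re + c) ^ 2 +
        (a - b) ^ 2 * (1 - (z₁ * (starRingEnd ℂ) z₂).re ^ 2) := by
  set w := z₁ * (starRingEnd ℂ) z₂ with hw
  have hz1 : z₁ * (starRingEnd ℂ) z₁ = 1 := by
    rw [Complex.mul_conj]; norm_cast
    rw [Complex.normSq_eq_norm_sq, h1]; norm_num
  have hz2 : z₂ * (starRingEnd ℂ) z₂ = 1 := by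
    rw [Complex.mul_conj]; norm_cast
    rw [Complex.normSq_eq_norm_sq, h2]; norm_num
  have hfac : (a : ℂ) * z₁ ^ 2 + (b : ℂ) * z₂ ^ 2 + (c : ℂ) * z₁ * z₂
      = z₁ * z₂ * ((a : ℂ) * w + (b : ℂ) * (starRingEnd ℂ) w + c) := by
    simp only [hw, map_mul, Complex.conj_conj]
    linear_combination (-(a : ℂ) * z₁ ^ 2) * hz2 + (-(b : ℂ) * z₂ ^ 2) * hz1
  have hwsq : w.re ^ 2 + w.im ^ 2 = 1 := by
    have : Complex.normSq w = 1 := by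
      rw [Complex.normSq_eq_norm_sq, hw, norm_mul, h1, Complex.norm_conj, h2]; norm_num
    rw [Complex.normSq_apply] at this; nlinarith [this]
  rw [hfac, norm_mul, norm_mul, h1, h2, one_mul, one_mul]
  rw [Complex.sq_norm, Complex.normSq_apply]
  simp only [Complex.add_re, Complex.add_im, Complex.mul_re, Complex.mul_im,
    Complex.ofReal_re, Complex.ofReal_im, Complex.conj_re, Complex.conj_im]
  nlinarith [hwsq]

private lemma aux_polydisc_bound (a b c M : ℝ)
    (hM : ∀ z₁ z₂ : ℂ, ‖z₁‖ = 1 → ‖z₂‖ = 1 →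
      ‖(a : ℂ) * z₁ ^ 2 + (b : ℂ) * z₂ ^ 2 + (c : ℂ) * z₁ * z₂‖ ≤ M) :
    ∀ z₁ z₂ : ℂ, ‖z₁‖ ≤ 1 → ‖z₂‖ ≤ 1 →
      ‖(a : ℂ) * z₁ ^ 2 + (b : ℂ) * z₂ ^ 2 + (c : ℂ) * z₁ * z₂‖ ≤ M := by
  have frb : frontier (ball (0:ℂ) 1) = sphere (0:ℂ) 1 := frontier_ball 0 one_ne_zero
  have clb : closure (ball (0:ℂ) 1) = closedBall (0:ℂ) 1 := closure_ball 0 one_ne_zero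
  have stepA : ∀ z₁ z₂ : ℂ, ‖z₁‖ = 1 → ‖z₂‖ ≤ 1 →
      ‖(a : ℂ) * z₁ ^ 2 + (b : ℂ) * z₂ ^ 2 + (c : ℂ) * z₁ * z₂‖ ≤ M := by
    intro z₁ z₂ h1 h2
    have := Complex.norm_le_of_forall_mem_frontier_norm_le (U := ball (0:ℂ) 1)
      (f := fun w => (a : ℂ) * z₁ ^ 2 + (b : ℂ) * w ^ 2 + (c : ℂ) * z₁ * w)
      isBounded_ball
      (Differentiable.diffContOnCl (by fun_prop))
      (C := M) ?_ (z := z₂) ?_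
    · simpa using this
    · intro w hw
      rw [frb, mem_sphere_iff_norm, sub_zero] at hw
      simpa using hM z₁ w h1 hw
    · rw [clb, mem_closedBall_zero_iff]; simpa using h2
  intro z₁ z₂ h1 h2
  have := Complex.norm_le_of_forall_mem_frontier_norm_le (U := ball (0:ℂ) 1)
    (f := fun w => (a : ℂ) * w ^ 2 + (b : ℂ) * z₂ ^ 2 + (c : ℂ) * w * z₂)
    isBounded_ball
    (Differentiable.diffContOnCl (by fun_prop))
    (C := M) ?_ (z := z₁) ?_
  · simpa using this
  · intro w hw
    rw [frb, mem_sphere_iff_norm, sub_zero] at hw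
    simpa using stepA w z₂ hw h2
  · rw [clb, mem_closedBall_zero_iff]; simpa using h1

private lemma aux_g_le_case1 (a b c x : ℝ) (hx1 : -1 ≤ x) (hx2 : x ≤ 1)
    (h : a * b ≥ 0 ∨ |c * (a + b)| > 4 * |a * b|) :
    ((a + b) * x + c) ^ 2 + (a - b) ^ 2 * (1 - x ^ 2) ≤ (|a + b| + |c|) ^ 2 := by
  have hcx : c * (a + b) * x ≤ |c| * |a + b| := by
    calc c * (a + b) * x ≤ |c * (a + b) * x| := le_abs_self _
    _ = |c| * |a + b| * |x| := by rw [abs_mul, abs_mul]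
    _ ≤ |c| * |a + b| * 1 := by
        have := abs_le.mpr ⟨hx1, hx2⟩
        have h0 : 0 ≤ |c| * |a + b| := by positivity
        nlinarith
    _ = |c| * |a + b| := by ring
  have hsq1 : |a + b| ^ 2 = (a + b) ^ 2 := _root_.sq_abs _
  have hsq2 : |c| ^ 2 = c ^ 2 := _root_.sq_abs _
  rcases le_or_gt 0 (a * b) with hab | hab
  · have h1 : 0 ≤ (1 - x ^ 2) := by nlinarith
    nlinarith [mul_nonneg hab h1, abs_nonneg c, abs_nonneg (a + b)]
  · have hK : |c * (a + b)| > 4 * |a * b| := h.resolve_left (by linarith)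
    have habs : |a * b| = -(a * b) := abs_of_neg hab
    rw [habs] at hK
    have hKx : c * (a + b) * x ≤ |c * (a + b)| * |x| := by
      calc c * (a + b) * x ≤ |c * (a + b) * x| := le_abs_self _
      _ = |c * (a + b)| * |x| := abs_mul _ _
    have hxabs : |x| ≤ 1 := abs_le.mpr ⟨hx1, hx2⟩
    have hx0 : 0 ≤ |x| := abs_nonneg x
    have hxx : x ^ 2 = |x| ^ 2 := (_root_.sq_abs x).symm
    have hcc : |c * (a + b)| = |c| * |a + b| := abs_mul _ _
    nlinarith [mul_nonneg (sub_nonneg.mpr hxabs) (mul_nonneg hx0 hx0),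
      mul_le_mul_of_nonneg_left hxabs (le_of_lt (by linarith : (0:ℝ) < |c * (a+b)|)),
      mul_nonneg (sub_nonneg.mpr hxabs) (sub_nonneg.mpr hxabs)]

private lemma aux_g_le_case2 (a b c x : ℝ) (hab : a * b < 0) :
    ((a + b) * x + c) ^ 2 + (a - b) ^ 2 * (1 - x ^ 2) ≤
      (a - b) ^ 2 * (1 - c ^ 2 / (4 * (a * b))) := by
  have hne : a * b ≠ 0 := ne_of_lt hab
  have key : ((a - b) ^ 2 * (1 - c ^ 2 / (4 * (a * b)))
      - (((a + b) * x + c) ^ 2 + (a - b) ^ 2 * (1 - x ^ 2))) * (-(4 * (a * b)))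
      = (4 * (a * b) * x + c * (a + b)) ^ 2 := by
    field_simp [left_ne_zero_of_mul hne, right_ne_zero_of_mul hne]
    ring
  nlinarith [key, sq_nonneg (4 * (a * b) * x + c * (a + b))]

private lemma aux_abs_add (u v : ℝ) (h : 0 ≤ v * u) : |u + v| = |u| + |v| := by
  rcases le_total 0 u with hu | hu <;> rcases le_total 0 v with hv | hv
  · rw [_root_.abs_of_nonneg hu, _root_.abs_of_nonneg hv, _root_.abs_of_nonneg (by linarith)]
  · have h3 : v * u = 0 := le_antisymm (mul_nonpos_of_nonpos_of_nonneg hv hu) h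
    rcases mul_eq_zero.mp h3 with h4 | h4 <;> simp [h4]
  · have h3 : v * u = 0 := le_antisymm (mul_nonpos_of_nonneg_of_nonpos hv hu) h
    rcases mul_eq_zero.mp h3 with h4 | h4 <;> simp [h4]
  · rw [_root_.abs_of_nonpos hu, _root_.abs_of_nonpos hv, _root_.abs_of_nonpos (by linarith)]; ring

private lemma aux_x_mem (z₁ z₂ : ℂ) (h1 : ‖z₁‖ = 1) (h2 : ‖z₂‖ = 1) :
    |(z₁ * (starRingEnd ℂ) z₂).re| ≤ 1 := by
  calc |(z₁ * (starRingEnd ℂ) z₂).re| ≤ ‖z₁ * (starRingEnd ℂ) z₂‖ :=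
        Complex.abs_re_le_norm _
  _ = 1 := by rw [norm_mul, h1, Complex.norm_conj, h2]; norm_num

/-- Sup norm over the closed unit polydisc of the complex 2-homogeneous polynomial
`P(z₁,z₂) = a z₁² + b z₂² + c z₁z₂` with real coefficients (Aron–Klimek formula). -/
theorem sup_norm_complex_quadratic (a b c : ℝ) :
    ((a * b ≥ 0 ∨ |c * (a + b)| > 4 * |a * b|) →
      sSup ((fun z : ℂ × ℂ =>
          ‖(a : ℂ) * z.1 ^ 2 + (b : ℂ) * z.2 ^ 2 + (c : ℂ) * z.1 * z.2‖) ''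
        {z : ℂ × ℂ | ‖z.1‖ ≤ 1 ∧ ‖z.2‖ ≤ 1}) = |a + b| + |c|) ∧
    (¬(a * b ≥ 0 ∨ |c * (a + b)| > 4 * |a * b|) →
      sSup ((fun z : ℂ × ℂ =>
          ‖(a : ℂ) * z.1 ^ 2 + (b : ℂ) * z.2 ^ 2 + (c : ℂ) * z.1 * z.2‖) ''
        {z : ℂ × ℂ | ‖z.1‖ ≤ 1 ∧ ‖z.2‖ ≤ 1}) =
        (|a| + |b|) * Real.sqrt (1 + c ^ 2 / (4 * |a * b|))) := by
  constructor
  · -- first branch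
    intro h
    apply IsGreatest.csSup_eq
    constructor
    · -- attainment at (1, ε)
      by_cases hc : 0 ≤ c * (a + b)
      · refine ⟨(1, 1), ⟨by simp, by simp⟩, ?_⟩
        have : (a : ℂ) * 1 ^ 2 + (b : ℂ) * 1 ^ 2 + (c : ℂ) * 1 * 1 = ((a + b + c : ℝ) : ℂ) := by
          push_cast; ring
        simp only [this, Complex.norm_real, Real.norm_eq_abs]
        exact aux_abs_add (a + b) c hc
      · refine ⟨(1, -1), ⟨by simp, by simp⟩, ?_⟩
        have : (a : ℂ) * 1 ^ 2 + (b : ℂ) * (-1) ^ 2 + (c : ℂ) * 1 * (-1)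
            = (((a + b) + -c : ℝ) : ℂ) := by push_cast; ring
        simp only [this, Complex.norm_real, Real.norm_eq_abs]
        rw [aux_abs_add (a + b) (-c) (by nlinarith), abs_neg]
    · rintro y ⟨z, hz, rfl⟩
      refine aux_polydisc_bound a b c (|a + b| + |c|) ?_ z.1 z.2 hz.1 hz.2
      intro z₁ z₂ h1 h2
      have hid := aux_torus_sq a b c z₁ z₂ h1 h2
      have hx := abs_le.mp (aux_x_mem z₁ z₂ h1 h2)
      have hb := aux_g_le_case1 a b c ((z₁ * (starRingEnd ℂ) z₂).re) hx.1 hx.2 h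
      have hM0 : 0 ≤ |a + b| + |c| := by positivity
      have h0 : (0:ℝ) ≤ ‖(a : ℂ) * z₁ ^ 2 + (b : ℂ) * z₂ ^ 2 + (c : ℂ) * z₁ * z₂‖ :=
        norm_nonneg _
      nlinarith [hid, hb]
  · -- second branch
    intro h
    push_neg at h
    obtain ⟨hab, hK⟩ := h
    have hne : a * b ≠ 0 := ne_of_lt hab
    have habs : |a * b| = -(a * b) := abs_of_neg hab
    set M := (|a| + |b|) * Real.sqrt (1 + c ^ 2 / (4 * |a * b|)) with hMdef
    have harg : (0:ℝ) ≤ 1 + c ^ 2 / (4 * |a * b|) := by positivity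
    have hM0 : 0 ≤ M := by positivity
    have hprod : |a| * |b| = -(a * b) := by rw [← abs_mul, habs]
    have e1 : (|a| + |b|) ^ 2 = (a - b) ^ 2 := by
      linear_combination _root_.sq_abs a + _root_.sq_abs b + 2 * hprod
    have e2 : 1 + c ^ 2 / (4 * |a * b|) = 1 - c ^ 2 / (4 * (a * b)) := by
      rw [habs]; field_simp; ring
    have hM2 : M ^ 2 = (a - b) ^ 2 * (1 - c ^ 2 / (4 * (a * b))) := by
      rw [hMdef, mul_pow, Real.sq_sqrt harg, e1, e2]
    apply IsGreatest.csSup_eq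
    constructor
    · -- attainment
      set s : ℝ := -(c * (a + b)) / (4 * (a * b)) with hs
      have hs2 : s ^ 2 ≤ 1 := by
        have hd : (0:ℝ) < (4 * (a * b)) ^ 2 := by positivity
        have hKsq : (c * (a + b)) ^ 2 ≤ (4 * (a * b)) ^ 2 := by
          rw [habs] at hK
          nlinarith [_root_.sq_abs (c * (a + b)), abs_nonneg (c * (a + b))]
        rw [hs, div_pow, div_le_one hd]
        nlinarith [hKsq]
      set y : ℝ := Real.sqrt (1 - s ^ 2) with hy
      have hy2 : y ^ 2 = 1 - s ^ 2 := Real.sq_sqrt (by linarith)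
      have habs1 : ‖(⟨s, y⟩ : ℂ)‖ = 1 := by
        rw [Complex.norm_def, Complex.normSq_mk]
        have : s * s + y * y = 1 := by nlinarith [hy2]
        rw [this, Real.sqrt_one]
      refine ⟨((⟨s, y⟩ : ℂ), 1), ⟨by rw [habs1], by simp⟩, ?_⟩
      have hid := aux_torus_sq a b c (⟨s, y⟩ : ℂ) 1 habs1 (by simp)
      have hre : ((⟨s, y⟩ : ℂ) * (starRingEnd ℂ) 1).re = s := by simp
      rw [hre] at hid
      have hval : ((a + b) * s + c) ^ 2 + (a - b) ^ 2 * (1 - s ^ 2) = M ^ 2 := by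
        rw [hM2, hs]; field_simp [left_ne_zero_of_mul hne, right_ne_zero_of_mul hne]; ring
      have := hid.trans hval
      exact (pow_left_inj₀ (norm_nonneg _) hM0 two_ne_zero).mp this
    · rintro z ⟨w, hw, rfl⟩
      refine aux_polydisc_bound a b c M ?_ w.1 w.2 hw.1 hw.2
      intro z₁ z₂ h1 h2
      have hid := aux_torus_sq a b c z₁ z₂ h1 h2
      have hb := aux_g_le_case2 a b c ((z₁ * (starRingEnd ℂ) z₂).re) hab
      have h0 : (0:ℝ) ≤ ‖(a : ℂ) * z₁ ^ 2 + (b : ℂ) * z₂ ^ 2 + (c : ℂ) * z₁ * z₂‖ :=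
        norm_nonneg _
      have h2 : ‖(a : ℂ) * z₁ ^ 2 + (b : ℂ) * z₂ ^ 2 + (c : ℂ) * z₁ * z₂‖ ^ 2
          ≤ M ^ 2 := by rw [hM2]; linarith [hid, hb]
      exact (pow_le_pow_iff_left₀ h0 hM0 two_ne_zero).mp h2
end

section
/- Every constant D ≥ 0 such that for every 2-homogeneous polynomial P(z₁,z₂) = a z₁² + b z₂² + c z₁z₂ with complex coefficients one has (|a|^{4/3} + |b|^{4/3} + |c|^{4/3})^{3/4} ≤ D · sup{|P(z₁,z₂)| : |z₁| ≤ 1, |z₂| ≤ 1} satisfies D ≥ (2 + c₀^{4/3})^{3/4} / (2·√(1 + c₀²/4)), where c₀ = 352203/125000; in particular D ≥ 1.1066. -/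
/-- Pointwise bound on the unit polydisc for `z₁² - z₂² + c z₁ z₂`. -/
lemma aux_pointwise (c : ℝ) (z₁ z₂ : ℂ) (h₁ : ‖z₁‖ ≤ 1)
    (h₂ : ‖z₂‖ ≤ 1) :
    ‖1 * z₁ ^ 2 + (-1) * z₂ ^ 2 + (c : ℂ) * z₁ * z₂‖ ≤
      Real.sqrt (4 + c ^ 2) := by
  rw [Real.le_sqrt (norm_nonneg _) (by positivity), Complex.sq_norm]
  have hr : z₁.re * z₁.re + z₁.im * z₁.im ≤ 1 := by
    have h := Complex.sq_norm z₁
    rw [Complex.normSq_apply] at h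
    nlinarith [norm_nonneg z₁]
  have hs : z₂.re * z₂.re + z₂.im * z₂.im ≤ 1 := by
    have h := Complex.sq_norm z₂
    rw [Complex.normSq_apply] at h
    nlinarith [norm_nonneg z₂]
  set p := z₁.re; set q := z₁.im; set u := z₂.re; set v := z₂.im
  have hB : (0:ℝ) ≤ (2 - (p*p+q*q) - (u*u+v*v)) * (2 + (p*p+q*q) + (u*u+v*v)) := by
    nlinarith [sq_nonneg p, sq_nonneg q, sq_nonneg u, sq_nonneg v]
  simp only [Complex.normSq_apply, Complex.add_re, Complex.add_im, Complex.mul_re,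
    Complex.mul_im, Complex.one_re, Complex.one_im, Complex.neg_re, Complex.neg_im,
    Complex.ofReal_re, Complex.ofReal_im, pow_two]
  nlinarith [sq_nonneg (c*(p*p+q*q-u*u-v*v) - 4*(p*u+q*v)), hB,
    mul_nonneg (sq_nonneg c) hB]

/-- Lower bound for the constant `D_{ℂ,2}` in the complex polynomial
Bohnenblust–Hille inequality for 2-homogeneous polynomials on ℓ∞²(ℂ), obtained from
the polynomial `z₁² - z₂² + c₀ z₁z₂` with `c₀ = 352203/125000`; in particular
`D ≥ 1.1066`. -/
theorem D_C2_lower_bound (D : ℝ) (hD0 : 0 ≤ D)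
    (hD : ∀ a b c : ℂ,
      (‖a‖ ^ (4 / 3 : ℝ) + ‖b‖ ^ (4 / 3 : ℝ) +
          ‖c‖ ^ (4 / 3 : ℝ)) ^ (3 / 4 : ℝ) ≤
        D * sSup ((fun z : ℂ × ℂ =>
            ‖a * z.1 ^ 2 + b * z.2 ^ 2 + c * z.1 * z.2‖) ''
          {z : ℂ × ℂ | ‖z.1‖ ≤ 1 ∧ ‖z.2‖ ≤ 1})) :
    (2 + (352203 / 125000 : ℝ) ^ (4 / 3 : ℝ)) ^ (3 / 4 : ℝ) /
        (2 * Real.sqrt (1 + (352203 / 125000 : ℝ) ^ 2 / 4)) ≤ D ∧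
      (1.1066 : ℝ) ≤ D := by
  set c0 : ℝ := 352203 / 125000 with hc0
  set L : ℝ := (2 + c0 ^ (4 / 3 : ℝ)) ^ (3 / 4 : ℝ) with hL
  set M : ℝ := 2 * Real.sqrt (1 + c0 ^ 2 / 4) with hM
  have hc0pos : (0:ℝ) < c0 := by norm_num [hc0]
  -- M = sqrt (4 + c0^2)
  have hMs : M = Real.sqrt (4 + c0 ^ 2) := by
    rw [hM, show (4 + c0^2 : ℝ) = 4 * (1 + c0^2/4) by ring,
      Real.sqrt_mul (by norm_num), show Real.sqrt 4 = 2 by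
        rw [show (4:ℝ) = 2^2 by norm_num]; exact Real.sqrt_sq (by norm_num)]
  have hMpos : 0 < M := by
    rw [hM]; positivity
  -- the main inequality L ≤ D * M
  have key : L ≤ D * M := by
    have h := hD 1 (-1) ((c0 : ℝ) : ℂ)
    have habs : ‖((c0 : ℝ) : ℂ)‖ = c0 := by
      simp [abs_of_pos hc0pos]
    have habs1 : ‖(-1 : ℂ)‖ = 1 := by simp
    rw [habs, norm_one, habs1, Real.one_rpow] at h
    have hsup : sSup ((fun z : ℂ × ℂ =>
        ‖1 * z.1 ^ 2 + (-1) * z.2 ^ 2 + ((c0:ℝ):ℂ) * z.1 * z.2‖) ''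
        {z : ℂ × ℂ | ‖z.1‖ ≤ 1 ∧ ‖z.2‖ ≤ 1}) ≤ M := by
      rw [hMs]
      apply Real.sSup_le
      · rintro x ⟨z, ⟨hz1, hz2⟩, rfl⟩
        exact aux_pointwise c0 z.1 z.2 hz1 hz2
      · positivity
    calc L = (1 + 1 + c0 ^ (4/3 : ℝ)) ^ (3/4 : ℝ) := by rw [hL]; norm_num
    _ ≤ D * _ := h
    _ ≤ D * M := mul_le_mul_of_nonneg_left hsup hD0
  have h1 : L / M ≤ D := by
    rw [div_le_iff₀ hMpos]; exact key
  refine ⟨h1, le_trans ?_ h1⟩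
  -- numerical bound 1.1066 ≤ L / M
  have hLlb : (3.8238989 : ℝ) ≤ L := by
    have ht : (3.9796424 : ℝ) ≤ c0 ^ (4/3 : ℝ) := by
      have : c0 ^ (4/3 : ℝ) = (c0 ^ (4:ℕ)) ^ ((3:ℝ)⁻¹) := by
        rw [← Real.rpow_natCast c0 4, ← Real.rpow_mul hc0pos.le]
        norm_num
      rw [this, Real.le_rpow_inv_iff_of_pos (by norm_num) (by positivity)
        (by norm_num : (0:ℝ) < 3)]
      rw [show (3:ℝ) = ((3:ℕ):ℝ) by norm_num, Real.rpow_natCast]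
      rw [hc0]; norm_num
    have h2 : L = ((2 + c0 ^ (4/3:ℝ)) ^ (3:ℕ)) ^ ((4:ℝ)⁻¹) := by
      rw [hL, ← Real.rpow_natCast (2 + c0 ^ (4/3:ℝ)) 3, ← Real.rpow_mul (by positivity)]
      norm_num
    rw [h2, Real.le_rpow_inv_iff_of_pos (by norm_num) (by positivity)
      (by norm_num : (0:ℝ) < 4)]
    rw [show (4:ℝ) = ((4:ℕ):ℝ) by norm_num, Real.rpow_natCast]
    have : ((2 + 3.9796424 : ℝ)) ^ (3:ℕ) ≤ (2 + c0 ^ (4/3:ℝ)) ^ (3:ℕ) := by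
      apply pow_le_pow_left₀ (by norm_num)
      linarith
    refine le_trans ?_ this
    norm_num
  have hMub : M ≤ (3.4552866 : ℝ) := by
    rw [hMs]
    rw [Real.sqrt_le_left (by norm_num)]
    rw [hc0]; norm_num
  calc (1.1066 : ℝ) ≤ 3.8238989 / 3.4552866 := by norm_num
  _ ≤ L / M := by
    apply div_le_div₀ (by positivity) hLlb hMpos hMub
end
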